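/- Let k ≥ 2 be a real number. Define real polynomials φ_n by φ_1(x) = ((k+2)/4)·x, φ_2(x) = x² − ((3k−6)/4)·x − k, and φ_n(x) = (x − (k−2)/2)·φ_{n−1}(x) − ((k+2)/4)·φ_{n−2}(x) for n ≥ 3, and let D_n(x) = det(x·I_n − M_n), where M_n is the n × n tridiagonal matrix with diagonal entries (k−2)/2, subdiagonal entries (k+2)/4, and superdiagonal entries 1 (with D_0(x) = 1). Then for every integer n ≥ 3 and every real x, φ_n(x) = (x² − ((3k−6)/4)·x − k)·D_{n−2}(x) − ((k+2)/4)²·x·D_{n−3}(x). -/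

import Mathlib

open Polynomial

/-- `D n x = det (x • I − M_n)` where `M_n` is the `n × n` tridiagonal matrix with
diagonal entries `(k−2)/2`, subdiagonal entries `(k+2)/4` and superdiagonal
entries `1`.  In particular `D 0 x = 1`. -/
noncomputable def tridiagCharDet (k : ℝ) (n : ℕ) (x : ℝ) : ℝ :=
  (x • (1 : Matrix (Fin n) (Fin n) ℝ) -
    Matrix.of fun i j : Fin n =>
      if (i : ℕ) = (j : ℕ) then (k - 2) / 2
      else if (i : ℕ) = (j : ℕ) + 1 then (k + 2) / 4
      else if (j : ℕ) = (i : ℕ) + 1 then 1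
      else 0).det

/-!
As functions of `n ≥ 3`, both sides satisfy the recurrence
`y_{n+1} = (x − (k−2)/2) y_n − ((k+2)/4) y_{n−1}`: the left side by definition, the right side
because `D_n` does, by expanding the tridiagonal determinant along its first row and the second
minor along its first column. So it suffices to compare the cases `n = 3` and `n = 4`.
-/

theorem seq_eq_of_twoStep_recurrence {α : Type*} {u v : ℕ → α} (f : α → α → α)
    (hu : ∀ m, u (m + 2) = f (u (m + 1)) (u m)) (hv : ∀ m, v (m + 2) = f (v (m + 1)) (v m))
    (h0 : u 0 = v 0) (h1 : u 1 = v 1) : u = v := by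
  funext m
  induction m using Nat.twoStepInduction with
  | zero => exact h0
  | one => exact h1
  | more m ihm ihm1 => rw [hu, hv, ihm, ihm1]

namespace Matrix

variable {R : Type*} [CommRing R]

def tridiagonalToeplitz (n : ℕ) (a b c : R) : Matrix (Fin n) (Fin n) R :=
  of fun i j =>
    if (i : ℕ) = j then a else if (i : ℕ) = j + 1 then b else if (j : ℕ) = i + 1 then c else 0

theorem tridiagonalToeplitz_submatrix_succ (n : ℕ) (a b c : R) :
    (tridiagonalToeplitz (n + 1) a b c).submatrix Fin.succ Fin.succ =
      tridiagonalToeplitz n a b c := by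
  ext i j
  simp [tridiagonalToeplitz]

theorem det_tridiagonalToeplitz_succ_succ (n : ℕ) (a b c : R) :
    (tridiagonalToeplitz (n + 2) a b c).det =
      a * (tridiagonalToeplitz (n + 1) a b c).det - b * c * (tridiagonalToeplitz n a b c).det := by
  set T := tridiagonalToeplitz (n + 2) a b c
  have h00 : T 0 0 = a := by simp [T, tridiagonalToeplitz]
  have h01 : T 0 1 = c := by simp [T, tridiagonalToeplitz]
  have hminor₀ : T.submatrix Fin.succ Fin.succ = tridiagonalToeplitz (n + 1) a b c :=
    tridiagonalToeplitz_submatrix_succ _ a b c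
  have hminor₁₁ : (T.submatrix Fin.succ (Fin.succAbove 1)).submatrix Fin.succ Fin.succ =
      tridiagonalToeplitz n a b c := by
    have : Fin.succAbove (1 : Fin (n + 2)) ∘ Fin.succ = Fin.succ ∘ Fin.succ := by
      funext j
      exact Fin.succ_succAbove_succ 0 j
    rw [submatrix_submatrix, this, ← submatrix_submatrix, hminor₀,
      tridiagonalToeplitz_submatrix_succ]
  have hminor₁ : (T.submatrix Fin.succ (Fin.succAbove 1)).det =
      b * (tridiagonalToeplitz n a b c).det := by
    rw [det_succ_column_zero, Fin.sum_univ_succ,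
      Finset.sum_eq_zero fun i _ => by simp [T, tridiagonalToeplitz, Fin.succAbove], add_zero,
      Fin.succAbove_zero, hminor₁₁]
    simp [T, tridiagonalToeplitz]
  rw [det_succ_row_zero, Fin.sum_univ_succ, Fin.sum_univ_succ,
    Finset.sum_eq_zero fun j _ => by simp [T, tridiagonalToeplitz], add_zero,
    Fin.succAbove_zero, hminor₀, Fin.succ_zero_eq_one, hminor₁, h00, h01]
  simp only [Fin.val_zero, Fin.val_one, pow_zero, pow_one]
  ring

end Matrix

open Matrix

theorem tridiagCharDet_eq_det_tridiagonalToeplitz (k : ℝ) (n : ℕ) (x : ℝ) :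
    tridiagCharDet k n x = (tridiagonalToeplitz n (x - (k - 2) / 2) (-((k + 2) / 4)) (-1)).det := by
  unfold tridiagCharDet
  congr 1
  ext i j
  by_cases hij : i = j
  · simp [tridiagonalToeplitz, hij]
  · have hij' : (i : ℕ) ≠ j := Fin.val_ne_of_ne hij
    simp only [tridiagonalToeplitz, Matrix.sub_apply, Matrix.smul_apply, one_apply_ne hij,
      of_apply, hij', if_false, smul_zero, zero_sub]
    split_ifs <;> simp

theorem tridiagCharDet_zero (k x : ℝ) : tridiagCharDet k 0 x = 1 := det_fin_zero

theorem tridiagCharDet_one (k x : ℝ) : tridiagCharDet k 1 x = x - (k - 2) / 2 := by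
  simp [tridiagCharDet_eq_det_tridiagonalToeplitz, tridiagonalToeplitz]

theorem tridiagCharDet_add_two (k x : ℝ) (n : ℕ) :
    tridiagCharDet k (n + 2) x =
      (x - (k - 2) / 2) * tridiagCharDet k (n + 1) x - (k + 2) / 4 * tridiagCharDet k n x := by
  simp only [tridiagCharDet_eq_det_tridiagonalToeplitz, det_tridiagonalToeplitz_succ_succ]
  ring

theorem phi_eq_det_expansion_general (k : ℝ) (φ : ℕ → ℝ → ℝ)
    (h1 : ∀ x : ℝ, φ 1 x = (k + 2) / 4 * x)
    (h2 : ∀ x : ℝ, φ 2 x = x ^ 2 - (3 * k - 6) / 4 * x - k)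
    (hrec : ∀ n : ℕ, 3 ≤ n → ∀ x : ℝ,
      φ n x = (x - (k - 2) / 2) * φ (n - 1) x - (k + 2) / 4 * φ (n - 2) x)
    (n : ℕ) (hn : 3 ≤ n) (x : ℝ) :
    φ n x = (x ^ 2 - (3 * k - 6) / 4 * x - k) * tridiagCharDet k (n - 2) x
      - ((k + 2) / 4) ^ 2 * x * tridiagCharDet k (n - 3) x := by
  set q := x ^ 2 - (3 * k - 6) / 4 * x - k
  set step : ℝ → ℝ → ℝ := fun y z => (x - (k - 2) / 2) * y - (k + 2) / 4 * z
  set D := fun m => tridiagCharDet k m x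
  have hφ (m : ℕ) : φ (m + 3) x = step (φ (m + 2) x) (φ (m + 1) x) := hrec (m + 3) (by omega) x
  have hD (m : ℕ) : D (m + 2) = step (D (m + 1)) (D m) := tridiagCharDet_add_two k x m
  have hφ3 : φ 3 x = step q ((k + 2) / 4 * x) := by rw [hφ 0, h2, h1]
  have key : (fun m => φ (m + 3) x) = fun m => q * D (m + 1) - ((k + 2) / 4) ^ 2 * x * D m := by
    refine seq_eq_of_twoStep_recurrence step (fun m => hφ (m + 2)) (fun m => ?_) ?_ ?_
    · simp only [hD (m + 1), hD m, step]; ring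
    · simp only [hφ3, D, zero_add, tridiagCharDet_one, tridiagCharDet_zero, step]; ring
    · simp only [hφ 1, hφ3, h2, D, tridiagCharDet_add_two k x 0, zero_add, tridiagCharDet_one,
        tridiagCharDet_zero, step]; ring
  obtain ⟨m, rfl⟩ : ∃ m, n = m + 3 := ⟨n - 3, by omega⟩
  simpa using congrFun key m

/-- Laplace-expansion identity for the polynomials `φ_n`:
`φ_n(x) = (x² − ((3k−6)/4)x − k) D_{n−2}(x) − ((k+2)/4)² x D_{n−3}(x)`. -/
theorem phi_eq_det_expansion (k : ℝ) (hk : 2 ≤ k) (φ : ℕ → ℝ → ℝ)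
    (h1 : ∀ x : ℝ, φ 1 x = (k + 2) / 4 * x)
    (h2 : ∀ x : ℝ, φ 2 x = x ^ 2 - (3 * k - 6) / 4 * x - k)
    (hrec : ∀ n : ℕ, 3 ≤ n → ∀ x : ℝ,
      φ n x = (x - (k - 2) / 2) * φ (n - 1) x - (k + 2) / 4 * φ (n - 2) x)
    (n : ℕ) (hn : 3 ≤ n) (x : ℝ) :
    φ n x = (x ^ 2 - (3 * k - 6) / 4 * x - k) * tridiagCharDet k (n - 2) x
      - ((k + 2) / 4) ^ 2 * x * tridiagCharDet k (n - 3) x :=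
  phi_eq_det_expansion_general k φ h1 h2 hrec n hn x
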